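/- arXiv:2509.09793 — 3 statements merged into one kernel-verified Lean document; each statement's English description precedes it below -/
import Mathlib

section
/- Let g : ℝⁿ → ℝ be C¹ with L-Lipschitz gradient, L < 1, and D = Id - ∇g. Then the function φ defined on Im(D) by φ(x) = g(D⁻¹(x)) - ½‖D⁻¹(x) - x‖² satisfies: for all z ∈ ℝⁿ, D(z) minimizes y ↦ φ(y) + ½‖y - z‖² over Im(D), i.e. φ(D(z)) + ½‖D(z) - z‖² ≤ φ(y) + ½‖y - z‖² for all y ∈ Im(D). -/
open scoped RealInnerProductSpace

/-- Descent lemma: if `g` has `L`-Lipschitz gradient `g'`, then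
`g z ≤ g w + ⟪g' w, z - w⟫ + L/2 ‖z - w‖²`. -/
lemma descent_lemma (n : ℕ) (g : EuclideanSpace ℝ (Fin n) → ℝ)
    (g' : EuclideanSpace ℝ (Fin n) → EuclideanSpace ℝ (Fin n))
    (L : NNReal)
    (hdiff : ∀ x, HasGradientAt g (g' x) x)
    (hcont : Continuous g')
    (hlip : LipschitzWith L g')
    (w z : EuclideanSpace ℝ (Fin n)) :
    g z ≤ g w + ⟪g' w, z - w⟫ + (L : ℝ) / 2 * ‖z - w‖ ^ 2 := by
  set v : EuclideanSpace ℝ (Fin n) := z - w with hv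
  set c : ℝ → EuclideanSpace ℝ (Fin n) := fun t => w + t • v with hc
  have hcderiv : ∀ t : ℝ, HasDerivAt c v t := by
    intro t
    simpa [hc] using ((hasDerivAt_id t).smul_const v).const_add w
  have hh : ∀ t : ℝ, HasDerivAt (fun t => g (c t)) ⟪g' (c t), v⟫ t := by
    intro t
    have h1 := ((hdiff (c t)).hasFDerivAt).comp_hasDerivAt t (hcderiv t)
    simp at h1; exact h1
  have hccont : Continuous c :=
    continuous_const.add (continuous_id.smul continuous_const)
  have hicont : Continuous fun t : ℝ => ⟪g' (c t), v⟫ :=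
    ((hcont.comp hccont).inner continuous_const)
  have key : g (c 1) - g (c 0) = ∫ t in (0:ℝ)..1, ⟪g' (c t), v⟫ := by
    rw [intervalIntegral.integral_eq_sub_of_hasDerivAt (fun t _ => hh t)
      (hicont.intervalIntegrable 0 1)]
  have hc0 : c 0 = w := by simp [hc]
  have hc1 : c 1 = z := by simp [hc, hv]
  rw [hc0, hc1] at key
  -- bound the integral
  have hbound : (∫ t in (0:ℝ)..1, ⟪g' (c t), v⟫) ≤
      ∫ t in (0:ℝ)..1, (⟪g' w, v⟫ + (L : ℝ) * t * ‖v‖ ^ 2) := by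
    apply intervalIntegral.integral_mono_on (by norm_num)
      (hicont.intervalIntegrable 0 1)
      (((by fun_prop : Continuous fun t : ℝ => ⟪g' w, v⟫ + (L : ℝ) * t * ‖v‖ ^ 2)).intervalIntegrable 0 1)
    intro t ht
    have h1 : ⟪g' (c t) - g' w, v⟫ ≤ ‖g' (c t) - g' w‖ * ‖v‖ := real_inner_le_norm _ _
    have h2 : ‖g' (c t) - g' w‖ ≤ (L : ℝ) * (t * ‖v‖) := by
      have := hlip.dist_le_mul (c t) w
      rw [dist_eq_norm, dist_eq_norm] at this
      have hct : c t - w = t • v := by simp [hc]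
      rw [hct] at this
      rw [norm_smul, Real.norm_eq_abs, abs_of_nonneg ht.1] at this
      simpa [dist_eq_norm] using this
    have h3 : ⟪g' (c t), v⟫ = ⟪g' w, v⟫ + ⟪g' (c t) - g' w, v⟫ := by
      rw [inner_sub_left]; ring
    have h4 : ‖g' (c t) - g' w‖ * ‖v‖ ≤ (L : ℝ) * (t * ‖v‖) * ‖v‖ :=
      mul_le_mul_of_nonneg_right h2 (norm_nonneg _)
    nlinarith [norm_nonneg v]
  have hval : (∫ t in (0:ℝ)..1, (⟪g' w, v⟫ + (L : ℝ) * t * ‖v‖ ^ 2)) =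
      ⟪g' w, v⟫ + (L : ℝ) / 2 * ‖v‖ ^ 2 := by
    rw [intervalIntegral.integral_add (intervalIntegrable_const)
      (((by fun_prop : Continuous fun t : ℝ => (L : ℝ) * t * ‖v‖ ^ 2)).intervalIntegrable 0 1)]
    simp only [intervalIntegral.integral_const, smul_eq_mul]
    have : (∫ t in (0:ℝ)..1, (L : ℝ) * t * ‖v‖ ^ 2) =
        ((L : ℝ) * ‖v‖ ^ 2) * ∫ t in (0:ℝ)..1, t := by
      rw [← intervalIntegral.integral_const_mul]
      congr 1; ext t; ring
    rw [this, integral_id]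
    ring
  rw [hval] at hbound
  linarith [key, hbound]

/-- Let `g` be C¹ with `L`-Lipschitz gradient, `L < 1`, `D = Id - ∇g`, and `φ` defined
on `Im D` by `φ (D z) = g z - ½‖∇g z‖²` (i.e. `φ x = g (D⁻¹ x) - ½‖D⁻¹ x - x‖²`).
Then for all `z`, `D z` minimizes `y ↦ φ y + ½‖y - z‖²` over `Im D`. -/
theorem prox_denoiser_is_prox
    (n : ℕ) (g : EuclideanSpace ℝ (Fin n) → ℝ)
    (g' : EuclideanSpace ℝ (Fin n) → EuclideanSpace ℝ (Fin n))
    (L : NNReal) (hL : (L : ℝ) < 1)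
    (hdiff : ∀ x, HasGradientAt g (g' x) x)
    (hcont : Continuous g')
    (hlip : LipschitzWith L g')
    (D : EuclideanSpace ℝ (Fin n) → EuclideanSpace ℝ (Fin n))
    (hD : ∀ z, D z = z - g' z)
    (φ : EuclideanSpace ℝ (Fin n) → ℝ)
    (hφ : ∀ z, φ (D z) = g z - (1 / 2) * ‖g' z‖ ^ 2) :
    ∀ z, ∀ y ∈ Set.range D,
      φ (D z) + (1 / 2) * ‖D z - z‖ ^ 2 ≤ φ y + (1 / 2) * ‖y - z‖ ^ 2 := by
  rintro z y ⟨w, rfl⟩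
  rw [hφ z, hφ w, hD z, hD w]
  have h1 : z - g' z - z = -(g' z) := by abel
  have h2 : w - g' w - z = (w - z) - g' w := by abel
  rw [h1, h2, norm_neg, norm_sub_sq_real]
  have hdes := descent_lemma n g g' L hdiff hcont hlip w z
  have hip : ⟪g' w, z - w⟫ = - ⟪w - z, g' w⟫ := by
    rw [real_inner_comm, inner_sub_left, inner_sub_left]; ring
  have hnn : ‖z - w‖ = ‖w - z‖ := by rw [← norm_neg]; congr 1; abel
  rw [hip, hnn] at hdes
  nlinarith [sq_nonneg ‖w - z‖, norm_nonneg (w - z)]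
end

section
/- Let g be C² with ‖∇²g(x)‖ ≤ L < 1 for all x, D = Id - ∇g, and φ the potential with D = prox_φ. Then on Im(D), φ is differentiable with ∇φ(x) = D⁻¹(x) - x = ∇g(D⁻¹(x)), and ∇φ is L/(1-L)-Lipschitz on Im(D). -/
/-- Let `g` be C² with Hessian operator norm bounded by `L < 1` everywhere,
`D = Id - ∇g`, and `φ` defined on `Im D` by `φ (D z) = g z - ½‖∇g z‖²`. Then on
`Im D`, `φ` is differentiable with `∇φ x = D⁻¹ x - x = ∇g (D⁻¹ x)`, and `∇φ` is
`L/(1-L)`-Lipschitz on `Im D`. -/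
theorem prox_potential_gradient
    (n : ℕ) (g : EuclideanSpace ℝ (Fin n) → ℝ)
    (g' : EuclideanSpace ℝ (Fin n) → EuclideanSpace ℝ (Fin n))
    (L : ℝ) (hL : L < 1)
    (hg : ContDiff ℝ 2 g)
    (hdiff : ∀ x, HasGradientAt g (g' x) x)
    (hhess : ∀ x, ‖fderiv ℝ g' x‖ ≤ L)
    (D : EuclideanSpace ℝ (Fin n) → EuclideanSpace ℝ (Fin n))
    (hD : ∀ z, D z = z - g' z)
    (φ : EuclideanSpace ℝ (Fin n) → ℝ)
    (hφ : ∀ z, φ (D z) = g z - (1 / 2) * ‖g' z‖ ^ 2) :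
    (∀ x ∈ Set.range D,
      HasGradientAt φ (Function.invFun D x - x) x ∧
      Function.invFun D x - x = g' (Function.invFun D x)) ∧
    (∀ x ∈ Set.range D, ∀ y ∈ Set.range D,
      ‖(Function.invFun D x - x) - (Function.invFun D y - y)‖ ≤
        (L / (1 - L)) * ‖x - y‖) := by
  classical
  have hL0 : 0 ≤ L := le_trans (norm_nonneg _) (hhess 0)
  have h1L : (0:ℝ) < 1 - L := by linarith
  -- g' is C¹
  have hfd : ∀ x, fderiv ℝ g x = (InnerProductSpace.toDual ℝ _) (g' x) :=
    fun x => (hdiff x).hasFDerivAt.fderiv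
  have hcd : ContDiff ℝ 1 g' := by
    have h2 : ContDiff ℝ 1 (fun x => fderiv ℝ g x) := hg.fderiv_right (by norm_num)
    have hgeq : g' = fun x => (InnerProductSpace.toDual ℝ _).symm (fderiv ℝ g x) := by
      funext x; rw [hfd x]; simp
    rw [hgeq]
    exact ((InnerProductSpace.toDual ℝ _).symm.contDiff).comp h2
  have hg'diff : Differentiable ℝ g' := hcd.differentiable one_ne_zero
  have lip : LipschitzWith L.toNNReal g' := by
    apply lipschitzWith_of_nnnorm_fderiv_le hg'diff
    intro x
    rw [← NNReal.coe_le_coe, coe_nnnorm, Real.coe_toNNReal _ hL0]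
    exact hhess x
  have hlipn : ∀ a b, ‖g' a - g' b‖ ≤ L * ‖a - b‖ := by
    intro a b
    have h := lip.dist_le_mul a b
    rwa [dist_eq_norm, dist_eq_norm, Real.coe_toNNReal _ hL0] at h
  have hlow : ∀ a b, (1 - L) * ‖a - b‖ ≤ ‖D a - D b‖ := by
    intro a b
    have h1 : D a - D b = (a - b) - (g' a - g' b) := by rw [hD a, hD b]; abel
    have h2 : ‖a - b‖ - ‖g' a - g' b‖ ≤ ‖(a - b) - (g' a - g' b)‖ := norm_sub_norm_le _ _
    rw [h1]
    nlinarith [hlipn a b]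
  have hInj : Function.Injective D := by
    intro a b hab
    rw [← sub_eq_zero, ← norm_le_zero_iff]
    have h := hlow a b
    rw [hab, sub_self, norm_zero] at h
    nlinarith [norm_nonneg (a - b)]
  have hSurj : Function.Surjective D := by
    intro x
    have hK : L.toNNReal < 1 := by
      rw [← NNReal.coe_lt_coe, Real.coe_toNNReal _ hL0, NNReal.coe_one]
      exact hL
    have lipT : LipschitzWith L.toNNReal (fun z => x + g' z) := by
      intro a b
      simpa [edist_add_left] using lip a b
    have hc : ContractingWith L.toNNReal (fun z => x + g' z) := ⟨hK, lipT⟩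
    obtain ⟨z, hz, -, -⟩ := hc.exists_fixedPoint 0 (edist_ne_top _ _)
    exact ⟨z, by rw [hD z]; exact sub_eq_iff_eq_add.mpr hz.symm⟩
  set Ei := Function.invFun D with hEi
  have hDE : ∀ x, D (Ei x) = x := fun x => Function.invFun_eq (hSurj x)
  have hED : ∀ z, Ei (D z) = z := fun z => Function.leftInverse_invFun hInj z
  have hElip : LipschitzWith ⟨(1-L)⁻¹, by positivity⟩ Ei := by
    apply LipschitzWith.of_dist_le_mul
    intro a b
    rw [dist_eq_norm, dist_eq_norm]; change ‖Ei a - Ei b‖ ≤ (1-L)⁻¹ * ‖a - b‖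
    have h := hlow (Ei a) (Ei b)
    rw [hDE a, hDE b] at h
    rw [inv_mul_eq_div, le_div_iff₀ h1L]
    nlinarith
  have hExx : ∀ x, Ei x - x = g' (Ei x) := by
    intro x
    have h : ∀ a, Ei (D a) - D a = g' (Ei (D a)) := by
      intro a; rw [hED a, hD a]; abel
    have h2 := h (Ei x)
    rwa [hDE x] at h2
  have key : ∀ x, HasGradientAt φ (g' (Ei x)) x := by
    intro x
    set z := Ei x with hz
    set H := fderiv ℝ g' z with hHdef
    have hHlt : ‖H‖ < 1 := lt_of_le_of_lt (hhess z) hL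
    set u : (EuclideanSpace ℝ (Fin n) →L[ℝ] EuclideanSpace ℝ (Fin n))ˣ :=
      Units.oneSub H hHlt with hu
    set eqv := ContinuousLinearEquiv.ofUnit u with heqv
    have heqvCoe : (eqv : EuclideanSpace ℝ (Fin n) →L[ℝ] EuclideanSpace ℝ (Fin n))
        = ContinuousLinearMap.id ℝ _ - H := rfl
    have hHd : HasFDerivAt g' H z := (hg'diff z).hasFDerivAt
    have hDd : HasFDerivAt D (eqv : EuclideanSpace ℝ (Fin n) →L[ℝ] _) z := by
      have hDfun : D = fun w => w - g' w := funext hD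
      rw [heqvCoe, hDfun]
      exact (hasFDerivAt_id z).sub hHd
    have hE : HasFDerivAt Ei
        ((eqv.symm : EuclideanSpace ℝ (Fin n) →L[ℝ] EuclideanSpace ℝ (Fin n))) x :=
      HasFDerivAt.of_local_left_inverse hElip.continuous.continuousAt hDd
        (Filter.Eventually.of_forall hDE)
    set F := fun w : EuclideanSpace ℝ (Fin n) => g w - (1/2 : ℝ) * ‖g' w‖ ^ 2 with hF
    have hFd : HasFDerivAt F
        (((InnerProductSpace.toDual ℝ _) (g' z) :
            EuclideanSpace ℝ (Fin n) →L[ℝ] ℝ).comp (ContinuousLinearMap.id ℝ _ - H)) z := by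
      have hgd : HasFDerivAt g ((InnerProductSpace.toDual ℝ _) (g' z)) z := (hdiff z).hasFDerivAt
      have hginner : HasFDerivAt (fun w => (inner ℝ (g' w) (g' w) : ℝ))
          ((fderivInnerCLM ℝ (g' z, g' z)).comp (H.prod H)) z := hHd.inner ℝ hHd
      have h2 : HasFDerivAt (fun w => (1/2 : ℝ) * ‖g' w‖ ^ 2)
          ((1/2 : ℝ) • ((fderivInnerCLM ℝ (g' z, g' z)).comp (H.prod H))) z := by
        have hrw : (fun w => (1/2:ℝ) * ‖g' w‖^2)
            = fun w => (1/2:ℝ) * (inner ℝ (g' w) (g' w) : ℝ) := by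
          funext w; rw [real_inner_self_eq_norm_sq]
        rw [hrw]
        exact hginner.const_mul _
      have h3 := hgd.sub h2
      refine h3.congr_fderiv ?_
      symm
      apply ContinuousLinearMap.ext
      intro v
      simp only [ContinuousLinearMap.comp_apply, ContinuousLinearMap.sub_apply,
        ContinuousLinearMap.id_apply, ContinuousLinearMap.smul_apply,
        ContinuousLinearMap.prod_apply, fderivInnerCLM_apply,
        InnerProductSpace.toDual_apply_apply, smul_eq_mul, inner_sub_right]
      rw [real_inner_comm (H v) (g' z)]
      ring
    have hφF : ∀ w, φ w = F (Ei w) := by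
      intro w
      have h := hφ (Ei w)
      rwa [hDE w] at h
    have hcomp := hFd.comp x hE
    have heqCLM : (((InnerProductSpace.toDual ℝ _) (g' z) :
            EuclideanSpace ℝ (Fin n) →L[ℝ] ℝ).comp
          (ContinuousLinearMap.id ℝ _ - H)).comp
          (eqv.symm : EuclideanSpace ℝ (Fin n) →L[ℝ] _)
        = (InnerProductSpace.toDual ℝ _) (g' z) := by
      apply ContinuousLinearMap.ext
      intro v
      simp only [ContinuousLinearMap.comp_apply]
      congr 1
      have h : (ContinuousLinearMap.id ℝ (EuclideanSpace ℝ (Fin n)) - H)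
          ((eqv.symm : EuclideanSpace ℝ (Fin n) →L[ℝ] _) v) = eqv (eqv.symm v) := rfl
      rw [h, eqv.apply_symm_apply]
    have hfinal : HasFDerivAt φ ((InnerProductSpace.toDual ℝ _) (g' z)) x := by
      rw [← heqCLM]
      exact hcomp.congr_of_eventuallyEq (Filter.Eventually.of_forall hφF)
    simpa using hfinal.hasGradientAt
  constructor
  · intro x _
    refine ⟨?_, hExx x⟩
    have h := key x
    rwa [← hExx x] at h
  · intro x _ y _
    rw [hExx x, hExx y]
    have h1 : ‖g' (Ei x) - g' (Ei y)‖ ≤ L * ‖Ei x - Ei y‖ := hlipn _ _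
    have h2 : (1 - L) * ‖Ei x - Ei y‖ ≤ ‖x - y‖ := by
      have h := hlow (Ei x) (Ei y)
      rwa [hDE x, hDE y] at h
    rw [div_mul_eq_mul_div, le_div_iff₀ h1L]
    nlinarith [norm_nonneg (Ei x - Ei y), norm_nonneg (x - y)]
end

section
/- The function φ whose prox equals D = Id - ∇g (with ∇g L-Lipschitz, L < 1) is ρ-weakly convex with ρ = L/(L+1), i.e., φ(x) + (ρ/2)‖x‖² is convex on Im(D). -/
open RealInnerProductSpace Set in
/-- Descent lemma: two-sided quadratic bound for a function with Lipschitz gradient. -/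
theorem descent_aux {E : Type*} [NormedAddCommGroup E] [InnerProductSpace ℝ E]
    [CompleteSpace E] {g : E → ℝ} {g' : E → E} {L : NNReal}
    (hdiff : ∀ x, HasGradientAt g (g' x) x) (hlip : LipschitzWith L g') (x y : E) :
    |g y - g x - ⟪g' x, y - x⟫| ≤ (L : ℝ) / 2 * ‖y - x‖ ^ 2 := by
  set v := y - x with hv
  have hline : ∀ t : ℝ, HasDerivAt (fun t : ℝ => x + t • v) v t := fun t => by
    simpa using ((hasDerivAt_id t).smul_const v).const_add x
  have hcomp : ∀ t : ℝ, HasDerivAt (fun t : ℝ => g (x + t • v)) ⟪g' (x + t • v), v⟫ t := by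
    intro t
    have h2 := (hdiff (x + t • v)).hasFDerivAt.comp_hasDerivAt t (hline t)
    simpa [InnerProductSpace.toDual_apply_apply, Function.comp_def] using h2
  set G : ℝ → ℝ := fun t => g (x + t • v) - t * ⟪g' x, v⟫ - g x with hGdef
  have hG : ∀ t : ℝ, HasDerivAt G (⟪g' (x + t • v) - g' x, v⟫) t := by
    intro t
    have := ((hcomp t).sub ((hasDerivAt_id t).mul_const ⟪g' x, v⟫)).sub_const (g x)
    simpa [inner_sub_left, hGdef] using this
  have hB : ∀ t : ℝ, HasDerivAt (fun t : ℝ => (L : ℝ) / 2 * ‖v‖ ^ 2 * t ^ 2)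
      ((L : ℝ) * ‖v‖ ^ 2 * t) t := by
    intro t
    have := (hasDerivAt_pow 2 t).const_mul ((L : ℝ) / 2 * ‖v‖ ^ 2)
    refine this.congr_deriv ?_
    norm_num
    ring
  have bound : ∀ t ∈ Ico (0 : ℝ) 1,
      ‖⟪g' (x + t • v) - g' x, v⟫‖ ≤ (L : ℝ) * ‖v‖ ^ 2 * t := by
    intro t ht
    have h1 : ‖⟪g' (x + t • v) - g' x, v⟫‖ ≤ ‖g' (x + t • v) - g' x‖ * ‖v‖ :=
      norm_inner_le_norm _ _
    have h2 : ‖g' (x + t • v) - g' x‖ ≤ (L : ℝ) * ‖t • v‖ := by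
      have := hlip.dist_le_mul (x + t • v) x
      simpa [dist_eq_norm] using this
    have h3 : ‖t • v‖ = t * ‖v‖ := by
      rw [norm_smul, Real.norm_eq_abs, abs_of_nonneg ht.1]
    rw [h3] at h2
    calc ‖⟪g' (x + t • v) - g' x, v⟫‖ ≤ ‖g' (x + t • v) - g' x‖ * ‖v‖ := h1
      _ ≤ ((L : ℝ) * (t * ‖v‖)) * ‖v‖ := mul_le_mul_of_nonneg_right h2 (norm_nonneg v)
      _ = (L : ℝ) * ‖v‖ ^ 2 * t := by ring
  have key := image_norm_le_of_norm_deriv_right_le_deriv_boundary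
    (f := G) (f' := fun t => ⟪g' (x + t • v) - g' x, v⟫) (a := 0) (b := 1)
    (fun t _ => (hG t).continuousAt.continuousWithinAt)
    (fun t _ => (hG t).hasDerivWithinAt)
    (by simp [hGdef]) hB bound
  have h1 := key (by norm_num : (1:ℝ) ∈ Icc (0:ℝ) 1)
  have hx1 : x + v = y := by rw [hv]; abel
  have : g y - g x - ⟪g' x, v⟫ = g y - ⟪g' x, v⟫ - g x := by ring
  rw [this]
  simpa [hGdef, hx1, Real.norm_eq_abs] using h1

open RealInnerProductSpace Set in
/-- Cocoercivity-type inequality for a function with an `L`-Lipschitz gradient. -/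
theorem coco_aux {E : Type*} [NormedAddCommGroup E] [InnerProductSpace ℝ E]
    [CompleteSpace E] {g : E → ℝ} {g' : E → E} {L : NNReal}
    (hdiff : ∀ x, HasGradientAt g (g' x) x) (hlip : LipschitzWith L g')
    (hL0 : 0 < (L : ℝ)) (x y : E) :
    1 / (4 * (L : ℝ)) * ‖(L : ℝ) • (y - x) + (g' y - g' x)‖ ^ 2
      - (L : ℝ) / 2 * ‖y - x‖ ^ 2 ≤ g y - g x - ⟪g' x, y - x⟫ := by
  set d := y - x with hd
  set w := (L : ℝ) • d + (g' y - g' x) with hw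
  set c := 1 / (2 * (L : ℝ)) with hc
  set z := y - c • w with hz
  have h1 := (abs_le.1 (descent_aux hdiff hlip x z)).1
  have h2 := (abs_le.1 (descent_aux hdiff hlip y z)).2
  have hzx : z - x = d - c • w := by rw [hz, hd]; abel
  have hzy : z - y = -(c • w) := by rw [hz]; abel
  have e1 : ‖z - x‖ ^ 2 = ‖d‖ ^ 2 - 2 * (c * ⟪d, w⟫) + c ^ 2 * ‖w‖ ^ 2 := by
    rw [hzx, norm_sub_sq_real, real_inner_smul_right, norm_smul, Real.norm_eq_abs,
      mul_pow, sq_abs]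
  have e2 : ‖z - y‖ ^ 2 = c ^ 2 * ‖w‖ ^ 2 := by
    rw [hzy, norm_neg, norm_smul, Real.norm_eq_abs, mul_pow, sq_abs]
  have e3 : ⟪g' x, z - x⟫ = ⟪g' x, d⟫ - c * ⟪g' x, w⟫ := by
    rw [hzx, inner_sub_right, real_inner_smul_right]
  have e4 : ⟪g' y, z - y⟫ = -(c * ⟪g' y, w⟫) := by
    rw [hzy, inner_neg_right, real_inner_smul_right]
  have e5 : (L : ℝ) * ⟪d, w⟫ + (⟪g' y, w⟫ - ⟪g' x, w⟫) = ‖w‖ ^ 2 := by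
    have h : ⟪w, w⟫ = ‖w‖ ^ 2 := real_inner_self_eq_norm_sq w
    rw [← h, hw]
    simp only [inner_add_left, inner_sub_left, real_inner_smul_left, inner_add_right, inner_sub_right,
      real_inner_smul_right, real_inner_comm (g' x) d, real_inner_comm (g' y) d,
      real_inner_comm (g' y) (g' x)]
    ring
  have e5c : c * ⟪g' y, w⟫ - c * ⟪g' x, w⟫ = c * ‖w‖ ^ 2 - c * ((L : ℝ) * ⟪d, w⟫) := by
    linear_combination c * e5
  rw [e1, e3] at h1
  rw [e2, e4] at h2
  have master : c * ‖w‖ ^ 2 - c * ((L : ℝ) * ⟪d, w⟫)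
      - (L : ℝ) / 2 * (‖d‖ ^ 2 - 2 * (c * ⟪d, w⟫) + c ^ 2 * ‖w‖ ^ 2)
      - (L : ℝ) / 2 * (c ^ 2 * ‖w‖ ^ 2)
      = 1 / (4 * (L : ℝ)) * ‖w‖ ^ 2 - (L : ℝ) / 2 * ‖d‖ ^ 2 := by
    rw [hc]
    field_simp
    ring
  linarith [h1, h2, e5c, master]

open RealInnerProductSpace Set in
/-- Key inequality for `ρ`-weak convexity with `ρ = L / (L + 1)`. -/
theorem weak_aux {E : Type*} [NormedAddCommGroup E] [InnerProductSpace ℝ E]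
    [CompleteSpace E] {g : E → ℝ} {g' : E → E} {L : NNReal}
    (hdiff : ∀ x, HasGradientAt g (g' x) x) (hlip : LipschitzWith L g')
    (hL : (L : ℝ) < 1) (x y : E) :
    1 / 2 * ‖g' y - g' x‖ ^ 2 - ((L : ℝ) / ((L : ℝ) + 1)) / 2 * ‖(y - x) - (g' y - g' x)‖ ^ 2
      ≤ g y - g x - ⟪g' x, y - x⟫ := by
  rcases eq_or_lt_of_le L.coe_nonneg with h0 | h0
  · have he : g' y = g' x := by
      have h := hlip.dist_le_mul y x
      rw [← h0, zero_mul] at h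
      exact dist_le_zero.1 h
    have hd := (abs_le.1 (descent_aux hdiff hlip x y)).1
    rw [← h0] at hd
    simp only [he, sub_self, norm_zero, ← h0] at *
    norm_num at hd ⊢
    linarith
  · have hco := coco_aux hdiff hlip h0 x y
    have hw : ‖(L : ℝ) • (y - x) + (g' y - g' x)‖ ^ 2
        = (L : ℝ) ^ 2 * ‖y - x‖ ^ 2 + 2 * ((L : ℝ) * ⟪y - x, g' y - g' x⟫)
          + ‖g' y - g' x‖ ^ 2 := by
      rw [norm_add_sq_real, norm_smul, Real.norm_eq_abs, mul_pow, sq_abs,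
        real_inner_smul_left]
    have hde : ‖(y - x) - (g' y - g' x)‖ ^ 2
        = ‖y - x‖ ^ 2 - 2 * ⟪y - x, g' y - g' x⟫ + ‖g' y - g' x‖ ^ 2 :=
      norm_sub_sq_real _ _
    have hnn : (0:ℝ) ≤ ‖(L : ℝ) • (y - x) + (g' y - g' x)‖ ^ 2 := sq_nonneg _
    have hL1 : (0:ℝ) < (L : ℝ) + 1 := by linarith
    have id2 : 1 / 2 * ‖g' y - g' x‖ ^ 2
        - ((L : ℝ) / ((L : ℝ) + 1)) / 2 * ‖(y - x) - (g' y - g' x)‖ ^ 2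
        = 1 / (4 * (L : ℝ)) * ‖(L : ℝ) • (y - x) + (g' y - g' x)‖ ^ 2
          - (L : ℝ) / 2 * ‖y - x‖ ^ 2
          - (1 - (L : ℝ)) / (4 * (L : ℝ) * ((L : ℝ) + 1))
            * ‖(L : ℝ) • (y - x) + (g' y - g' x)‖ ^ 2 := by
      rw [hw, hde]
      field_simp
      ring
    have hcoef : (0:ℝ) ≤ (1 - (L : ℝ)) / (4 * (L : ℝ) * ((L : ℝ) + 1)) :=
      div_nonneg (by linarith) (by positivity)
    have := mul_nonneg hcoef hnn
    linarith [hco, id2, this]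

open RealInnerProductSpace Set in
/-- The potential `φ` whose prox equals `D = Id - ∇g` (with `∇g` `L`-Lipschitz, `L < 1`)
is `ρ`-weakly convex with `ρ = L / (L + 1)`: `x ↦ φ x + (ρ/2)‖x‖²` is convex on `Im D`. -/
theorem prox_potential_weakly_convex
    (n : ℕ) (g : EuclideanSpace ℝ (Fin n) → ℝ)
    (g' : EuclideanSpace ℝ (Fin n) → EuclideanSpace ℝ (Fin n))
    (L : NNReal) (hL : (L : ℝ) < 1)
    (hg : ContDiff ℝ 2 g)
    (hdiff : ∀ x, HasGradientAt g (g' x) x)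
    (hlip : LipschitzWith L g')
    (D : EuclideanSpace ℝ (Fin n) → EuclideanSpace ℝ (Fin n))
    (hD : ∀ z, D z = z - g' z)
    (φ : EuclideanSpace ℝ (Fin n) → ℝ)
    (hφ : ∀ z, φ (D z) = g z - (1 / 2) * ‖g' z‖ ^ 2) :
    ∀ x ∈ Set.range D, ∀ y ∈ Set.range D, ∀ a b : ℝ,
      0 ≤ a → 0 ≤ b → a + b = 1 → a • x + b • y ∈ Set.range D →
      φ (a • x + b • y) + (((L : ℝ) / ((L : ℝ) + 1)) / 2) * ‖a • x + b • y‖ ^ 2 ≤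
        a * (φ x + (((L : ℝ) / ((L : ℝ) + 1)) / 2) * ‖x‖ ^ 2) +
        b * (φ y + (((L : ℝ) / ((L : ℝ) + 1)) / 2) * ‖y‖ ^ 2) := by
  intro x hx y hy a b ha hb hab hz
  obtain ⟨s, hs⟩ := hx
  obtain ⟨t, ht⟩ := hy
  obtain ⟨r, hr⟩ := hz
  set ρ : ℝ := (L : ℝ) / ((L : ℝ) + 1) with hρ
  -- subgradient-type inequality for the shifted potential on the range of D
  have SG : ∀ p q : EuclideanSpace ℝ (Fin n),
      φ (D p) + ρ / 2 * ‖D p‖ ^ 2 + ⟪ρ • p + (1 - ρ) • (g' p), D q - D p⟫ ≤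
        φ (D q) + ρ / 2 * ‖D q‖ ^ 2 := by
    intro p q
    have K := weak_aux hdiff hlip hL p q
    have key : (g q - (1/2) * ‖g' q‖ ^ 2 + ρ/2 * ‖q - g' q‖ ^ 2)
        - (g p - (1/2) * ‖g' p‖ ^ 2 + ρ/2 * ‖p - g' p‖ ^ 2)
        - ⟪ρ • p + (1 - ρ) • (g' p), (q - g' q) - (p - g' p)⟫
        = (g q - g p - ⟪g' p, q - p⟫)
          - (1/2 * ‖g' q - g' p‖ ^ 2 - ρ/2 * ‖(q - p) - (g' q - g' p)‖ ^ 2) := by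
      simp only [norm_sub_sq_real, inner_sub_left, inner_sub_right, inner_add_left,
        real_inner_smul_left, real_inner_self_eq_norm_sq]
      rw [real_inner_comm (g' p) q, real_inner_comm (g' p) p, real_inner_comm (g' q) (g' p),
        real_inner_comm p q, real_inner_comm (g' q) p, real_inner_comm (g' q) q]
      ring
    rw [hφ p, hφ q, hD p, hD q]
    linarith [K, key]
  have S1 := SG r s
  have S2 := SG r t
  rw [hs, hr] at S1
  rw [ht, hr] at S2
  set P := ρ • r + (1 - ρ) • (g' r) with hP
  set w := a • x + b • y with hwdef
  have hsum0 : a • (x - w) + b • (y - w) = 0 := by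
    have h' : a • (x - w) + b • (y - w) = (a • x + b • y) - (a + b) • w := by module
    rw [h', hab, one_smul, hwdef, sub_self]
  have hip : a * ⟪P, x - w⟫ + b * ⟪P, y - w⟫ = 0 := by
    rw [← real_inner_smul_right P (x - w) a, ← real_inner_smul_right P (y - w) b,
      ← inner_add_right, hsum0, inner_zero_right]
  have A1 : a * (φ w + ρ / 2 * ‖w‖ ^ 2 + ⟪P, x - w⟫) ≤ a * (φ x + ρ / 2 * ‖x‖ ^ 2) :=
    mul_le_mul_of_nonneg_left S1 ha
  have A2 : b * (φ w + ρ / 2 * ‖w‖ ^ 2 + ⟪P, y - w⟫) ≤ b * (φ y + ρ / 2 * ‖y‖ ^ 2) :=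
    mul_le_mul_of_nonneg_left S2 hb
  have hsum : a * (φ w + ρ / 2 * ‖w‖ ^ 2) + b * (φ w + ρ / 2 * ‖w‖ ^ 2)
      = φ w + ρ / 2 * ‖w‖ ^ 2 := by
    rw [← add_mul, hab, one_mul]
  nlinarith [A1, A2, hip, hsum]
end
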